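/- Let V be a real vector space, Ω : V × V → ℝ an alternating bilinear form, and P : V* → V a linear map that is antisymmetric in the sense that ν(P μ) = −μ(P ν) for all μ, ν ∈ V*. Write ι : V → V* for ι(w) = Ω(w, ·). Suppose ξ, ζ ∈ V satisfy P(ι ξ) = ξ and P(ι ζ) = ζ. Let F, G ∈ V* and set dH_ξ = −ι ξ + F and dH_ζ = −ι ζ + G. Then the 'Poisson bracket' (dH_ζ)(P(dH_ξ)) equals Ω(ζ, ξ) + F(ζ) − G(ξ) + G(P F); that is, it equals the Barnich–Troessaert combination [I_ξ I_ζ Ω − I_ξ 𝓕_ζ + I_ζ 𝓕_ξ] plus the flux–flux term G(P F). -/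

import Mathlib

theorem Module.Dual.apply_map_eq_neg_of_map_eq {R M : Type*} [CommRing R] [AddCommGroup M]
    [Module R M] {P : Module.Dual R M →ₗ[R] M} (hP : ∀ μ ν : Module.Dual R M, ν (P μ) = -(μ (P ν)))
    {μ : Module.Dual R M} {v : M} (hv : P μ = v) (ν : Module.Dual R M) :
    μ (P ν) = -(ν v) := by
  rw [hP, hv]

theorem poisson_bracket_eq_BT_plus_flux_general (V : Type*) [AddCommGroup V] [Module ℝ V]
    (Ω : V →ₗ[ℝ] V →ₗ[ℝ] ℝ)
    (P : Module.Dual ℝ V →ₗ[ℝ] V)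
    (hP : ∀ μ ν : Module.Dual ℝ V, ν (P μ) = -(μ (P ν)))
    (ξ ζ : V) (hξ : P (Ω ξ) = ξ) (hζ : P (Ω ζ) = ζ)
    (F G : Module.Dual ℝ V) :
    (-(Ω ζ) + G) (P (-(Ω ξ) + F)) = Ω ζ ξ + F ζ - G ξ + G (P F) := by
  have hζF : Ω ζ (P F) = -(F ζ) := Module.Dual.apply_map_eq_neg_of_map_eq hP hζ F
  simp only [map_add, map_neg, LinearMap.add_apply, LinearMap.neg_apply, hξ, hζF]
  ring

/-- The Poisson bracket of localized charges equals the Barnich–Troessaert combination plus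
the flux–flux term: with `Ω` an alternating bilinear form, `P` an antisymmetric
pseudo-inverse satisfying `P(ιξ) = ξ`, `P(ιζ) = ζ`, and `dH_ξ = −ιξ + F`, `dH_ζ = −ιζ + G`,
one has `(dH_ζ)(P(dH_ξ)) = Ω(ζ, ξ) + F(ζ) − G(ξ) + G(P F)`. -/
theorem poisson_bracket_eq_BT_plus_flux (V : Type*) [AddCommGroup V] [Module ℝ V]
    (Ω : V →ₗ[ℝ] V →ₗ[ℝ] ℝ) (hΩ : ∀ v : V, Ω v v = 0)
    (P : Module.Dual ℝ V →ₗ[ℝ] V)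
    (hP : ∀ μ ν : Module.Dual ℝ V, ν (P μ) = -(μ (P ν)))
    (ξ ζ : V) (hξ : P (Ω ξ) = ξ) (hζ : P (Ω ζ) = ζ)
    (F G : Module.Dual ℝ V) :
    (-(Ω ζ) + G) (P (-(Ω ξ) + F)) = Ω ζ ξ + F ζ - G ξ + G (P F) :=
  poisson_bracket_eq_BT_plus_flux_general V Ω P hP ξ ζ hξ hζ F G
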